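/- arXiv:1307.3761 — 2 statements merged into one kernel-verified Lean document; each statement's English description precedes it below -/
import Mathlib

section
/- Let Λ be a discrete cocompact additive subgroup (full lattice) of covolume c in a finite-dimensional real vector space E, and let Ω ⊆ E be a measurable set with vol(Ω) > (q+1)·c, where q is a positive integer. Then there exist q+2 distinct points y_0, y_1, ..., y_{q+1} in Ω all lying in the same coset of Λ; in particular the differences y_0 - y_i (1 ≤ i ≤ q+1) give q+1 distinct nonzero elements of Λ lying in Ω - Ω. -/
/-!
Cut `Ω` along a fundamental domain `F` of `Λ`: the pieces `(g +ᵥ Ω) ∩ F`, `g ∈ Λ`, have total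
measure `μ Ω > (q + 1) μ F`, so their multiplicity function, whose integral is that total, exceeds
`q + 1` somewhere. A point `x` lying in `q + 2` pieces gives the points `x - g ∈ Ω`, all in one
coset of `Λ`.
-/

open MeasureTheory Pointwise
open scoped ENNReal

theorem Set.exists_injective_fin_of_lt_encard {α : Type*} {s : Set α} {n : ℕ}
    (h : (n : ℕ∞) < s.encard) : ∃ f : Fin (n + 1) → α, Function.Injective f ∧ ∀ i, f i ∈ s := by
  obtain ⟨t, hts, htn⟩ := Set.exists_subset_encard_eq (Order.add_one_le_of_lt h)
  have ht : t.Finite := Set.finite_of_encard_eq_coe (k := n + 1) (by exact_mod_cast htn)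
  have hcard : ht.toFinset.card = n + 1 := by
    rw [← ENat.natCast_inj, ← Set.encard_coe_eq_coe_finsetCard, ht.coe_toFinset, htn]; rfl
  let e := ht.toFinset.equivFinOfCardEq hcard
  exact ⟨fun i => e.symm i, Subtype.val_injective.comp e.symm.injective,
    fun i => hts (ht.mem_toFinset.1 (e.symm i).2)⟩

theorem Set.tsum_indicator_one_eq_encard {α ι : Type*} (s : ι → Set α) (x : α) :
    ∑' i, (s i).indicator (1 : α → ℝ≥0∞) x = {i | x ∈ s i}.encard := by
  rw [← ENNReal.tsum_set_one, tsum_subtype {i | x ∈ s i} (fun _ => (1 : ℝ≥0∞))]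
  rfl

namespace MeasureTheory

variable {α ι : Type*} [MeasurableSpace α] {μ : Measure α} {s : ι → Set α}

theorem lintegral_encard_setOf_mem [Countable ι] (hs : ∀ i, NullMeasurableSet (s i) μ) :
    ∫⁻ x, ({i | x ∈ s i}.encard : ℝ≥0∞) ∂μ = ∑' i, μ (s i) := by
  simp_rw [← Set.tsum_indicator_one_eq_encard]
  rw [lintegral_tsum fun i => measurable_one.aemeasurable.indicator₀ (hs i)]
  exact tsum_congr fun i => lintegral_indicator_one₀ (hs i)

theorem tsum_measure_le_mul_measure_iUnion [Countable ι] (hs : ∀ i, NullMeasurableSet (s i) μ)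
    {n : ℕ∞} (hn : ∀ x, {i | x ∈ s i}.encard ≤ n) :
    ∑' i, μ (s i) ≤ n * μ (⋃ i, s i) := by
  have hbound (x : α) :
      ({i | x ∈ s i}.encard : ℝ≥0∞) ≤ (⋃ i, s i).indicator (fun _ => (n : ℝ≥0∞)) x := by
    by_cases hx : x ∈ ⋃ i, s i
    · rw [Set.indicator_of_mem hx]
      exact_mod_cast hn x
    · have hempty : {i | x ∈ s i} = ∅ :=
        Set.eq_empty_of_forall_notMem fun i hi => hx (Set.mem_iUnion_of_mem i hi)
      simp [hempty]
  calc ∑' i, μ (s i) = ∫⁻ x, ({i | x ∈ s i}.encard : ℝ≥0∞) ∂μ :=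
        (lintegral_encard_setOf_mem hs).symm
    _ ≤ ∫⁻ x, (⋃ i, s i).indicator (fun _ => (n : ℝ≥0∞)) x ∂μ := lintegral_mono hbound
    _ = n * μ (⋃ i, s i) := lintegral_indicator_const₀ (.iUnion hs) _

theorem exists_lt_encard_setOf_mem_of_mul_measure_iUnion_lt_tsum [Countable ι]
    (hs : ∀ i, NullMeasurableSet (s i) μ) {n : ℕ∞} (h : n * μ (⋃ i, s i) < ∑' i, μ (s i)) :
    ∃ x, n < {i | x ∈ s i}.encard := by
  contrapose! h
  exact tsum_measure_le_mul_measure_iUnion hs h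

theorem IsAddFundamentalDomain.exists_lt_encard_setOf_mem_vadd {G : Type*} [AddGroup G]
    [Countable G] [AddAction G α] [MeasurableConstVAdd G α] [VAddInvariantMeasure G α μ]
    {F Ω : Set α} (hF : IsAddFundamentalDomain G F μ) (hΩ : NullMeasurableSet Ω μ) {n : ℕ∞}
    (h : n * μ F < μ Ω) : ∃ x, n < {g : G | x ∈ g +ᵥ Ω}.encard := by
  have hpieces : ∀ g : G, NullMeasurableSet ((g +ᵥ Ω) ∩ F) μ :=
    fun g => (hΩ.vadd g).inter hF.nullMeasurableSet
  have hcover : n * μ (⋃ g : G, (g +ᵥ Ω) ∩ F) < ∑' g : G, μ ((g +ᵥ Ω) ∩ F) :=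
    calc n * μ (⋃ g : G, (g +ᵥ Ω) ∩ F) ≤ n * μ F := by
          gcongr; exact Set.iUnion_subset fun g => Set.inter_subset_right
      _ < μ Ω := h
      _ = ∑' g : G, μ ((g +ᵥ Ω) ∩ F) := hF.measure_eq_tsum Ω
  obtain ⟨x, hx⟩ := exists_lt_encard_setOf_mem_of_mul_measure_iUnion_lt_tsum hpieces hcover
  exact ⟨x, hx.trans_le (Set.encard_le_encard fun g hg => hg.1)⟩

end MeasureTheory

theorem ZLattice.exists_lt_encard_setOf_mem_vadd {E : Type*} [NormedAddCommGroup E]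
    [NormedSpace ℝ E] [FiniteDimensional ℝ E] [MeasurableSpace E] [BorelSpace E]
    (μ : Measure E) [μ.IsAddHaarMeasure] (Λ : Submodule ℤ E) [DiscreteTopology Λ]
    [IsZLattice ℝ Λ] {Ω : Set E} (hΩ : NullMeasurableSet Ω μ) {n : ℕ}
    (h : ENNReal.ofReal (n * ZLattice.covolume Λ μ) < μ Ω) :
    ∃ x, (n : ℕ∞) < {g : Λ | x ∈ g +ᵥ Ω}.encard := by
  -- The action instances of `Λ` on `E` are only found through `Λ.toAddSubgroup`.
  have : MeasurableConstVAdd Λ E := (inferInstance : MeasurableConstVAdd Λ.toAddSubgroup E)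
  have : VAddInvariantMeasure Λ E μ :=
    (inferInstance : VAddInvariantMeasure Λ.toAddSubgroup E μ)
  let b := (Module.Free.chooseBasis ℤ Λ).ofZLatticeBasis ℝ
  have hF := ZLattice.isAddFundamentalDomain (Module.Free.chooseBasis ℤ Λ) μ
  have hFfin : μ (ZSpan.fundamentalDomain b) ≠ ⊤ :=
    (ZSpan.fundamentalDomain_isBounded b).measure_lt_top.ne
  rw [ZLattice.covolume_eq_measure_fundamentalDomain Λ μ hF, ENNReal.ofReal_mul (by positivity),
    ENNReal.ofReal_natCast, ofReal_measureReal hFfin] at h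
  exact hF.exists_lt_encard_setOf_mem_vadd hΩ (by exact_mod_cast h)

theorem blichfeldt_pigeonhole_general
    (E : Type*) [NormedAddCommGroup E] [NormedSpace ℝ E] [FiniteDimensional ℝ E]
    [MeasurableSpace E] [BorelSpace E]
    (μ : Measure E) [μ.IsAddHaarMeasure]
    (Λ : Submodule ℤ E) [DiscreteTopology Λ] [IsZLattice ℝ Λ]
    (q : ℕ)
    (Ω : Set E) (hΩ : MeasurableSet Ω)
    (hvol : ENNReal.ofReal (((q : ℝ) + 1) * ZLattice.covolume Λ μ) < μ Ω) :
    ∃ y : Fin (q + 2) → E, Function.Injective y ∧ (∀ i, y i ∈ Ω) ∧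
      (∀ i j, y i - y j ∈ Λ) ∧
      Function.Injective (fun i : Fin (q + 1) => y 0 - y i.succ) ∧
      (∀ i : Fin (q + 1), y 0 - y i.succ ∈ Λ ∧ y 0 - y i.succ ≠ 0 ∧
        y 0 - y i.succ ∈ Ω - Ω) := by
  obtain ⟨x, hx⟩ := ZLattice.exists_lt_encard_setOf_mem_vadd μ Λ hΩ.nullMeasurableSet
    (n := q + 1) (by exact_mod_cast hvol)
  obtain ⟨g, hg_inj, hg⟩ := Set.exists_injective_fin_of_lt_encard hx
  set y : Fin (q + 2) → E := fun i => x - g i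
  have hy_mem : ∀ i, y i ∈ Ω := fun i => by
    simpa [y, sub_eq_neg_add, Submodule.vadd_def, vadd_eq_add] using
      Set.mem_vadd_set_iff_neg_vadd_mem.1 (hg i)
  have hy_sub : ∀ i j, y i - y j = g j - g i := fun i j => sub_sub_sub_cancel_left _ _ _
  have hy_inj : Function.Injective y := fun i j hij =>
    hg_inj (Subtype.ext (sub_right_injective hij))
  refine ⟨y, hy_inj, hy_mem, fun i j => hy_sub i j ▸ sub_mem (g j).2 (g i).2,
    fun i j hij => Fin.succ_injective _ (hy_inj (sub_right_injective hij)), fun i =>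
      ⟨hy_sub 0 i.succ ▸ sub_mem (g i.succ).2 (g 0).2,
        sub_ne_zero.2 (hy_inj.ne (Fin.succ_ne_zero i).symm),
        Set.sub_mem_sub (hy_mem 0) (hy_mem i.succ)⟩⟩

/-- **Blichfeldt-type pigeonhole.** Let `Λ` be a full lattice of covolume `c` in a
finite-dimensional real vector space `E`, and let `Ω ⊆ E` be measurable with
`vol(Ω) > (q+1)·c` for a positive integer `q`. Then there are `q+2` distinct points
`y₀, …, y_{q+1}` of `Ω` lying in the same coset of `Λ`; in particular the differences
`y₀ - yᵢ` (`1 ≤ i ≤ q+1`) are `q+1` distinct nonzero elements of `Λ` lying in `Ω - Ω`. -/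
theorem blichfeldt_pigeonhole
    (E : Type*) [NormedAddCommGroup E] [NormedSpace ℝ E] [FiniteDimensional ℝ E]
    [MeasurableSpace E] [BorelSpace E]
    (μ : Measure E) [μ.IsAddHaarMeasure]
    (Λ : Submodule ℤ E) [DiscreteTopology Λ] [IsZLattice ℝ Λ]
    (q : ℕ) (hq : 0 < q)
    (Ω : Set E) (hΩ : MeasurableSet Ω)
    (hvol : ENNReal.ofReal (((q : ℝ) + 1) * ZLattice.covolume Λ μ) < μ Ω) :
    ∃ y : Fin (q + 2) → E, Function.Injective y ∧ (∀ i, y i ∈ Ω) ∧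
      (∀ i j, y i - y j ∈ Λ) ∧
      Function.Injective (fun i : Fin (q + 1) => y 0 - y i.succ) ∧
      (∀ i : Fin (q + 1), y 0 - y i.succ ∈ Λ ∧ y 0 - y i.succ ≠ 0 ∧
        y 0 - y i.succ ∈ Ω - Ω) :=
  blichfeldt_pigeonhole_general E μ Λ q Ω hΩ hvol
end

section
/- Let Λ be a lattice of covolume c in a finite-dimensional real vector space E and suppose S ⊂ E is a measurable set with a finite intersection (S + S) ∩ Λ of cardinality q, and let (Ω_r)_{r>0} be an increasing family of measurable sets with vol(Ω_r) → ∞ as r → ∞ and Ω_r + Ω_r increasing. Then there exists r and a nonzero lattice point x ∈ Λ with x ∈ Ω_r - Ω_r and x ∉ S + S. -/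
/-!
If every nonzero lattice point of `Ω r - Ω r` lay in `S + S`, then `Ω r - Ω r` would meet `Λ`
in at most `q + 1` points. Since `g ↦ g - g₀` injects the lattice vectors `g` with
`x ∈ g + Ω r` into `(Ω r - Ω r) ∩ Λ`, every point lies in at most `q + 1` lattice translates
of `Ω r`; cutting `Ω r` along the translates of a fundamental domain then gives
`vol (Ω r) ≤ (q + 1) · covol Λ` for all `r`, contradicting `vol (Ω r) → ∞`.
-/

open MeasureTheory Pointwise Filter
open scoped ENNReal

namespace MeasureTheory.IsAddFundamentalDomain

variable {G α : Type*} [AddGroup G] [Countable G] [AddAction G α] [MeasurableSpace α]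
  [MeasurableConstVAdd G α] {μ : Measure α} [VAddInvariantMeasure G α μ] {F t : Set α}

theorem measure_le_mul_of_encard_le (hF : IsAddFundamentalDomain G F μ) (ht : MeasurableSet t)
    {n : ℕ∞} (hn : ∀ x, {g : G | x ∈ g +ᵥ t}.encard ≤ n) : μ t ≤ n * μ F := by
  have hcount (x : α) :
      ∑' g : G, (g +ᵥ t).indicator 1 x = ({g : G | x ∈ g +ᵥ t}.encard : ℝ≥0∞) := by
    rw [← ENNReal.tsum_set_one, tsum_subtype _ fun _ => 1]
    rfl
  calc μ t = ∑' g : G, μ ((g +ᵥ t) ∩ F) := hF.measure_eq_tsum t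
    _ = ∑' g : G, ∫⁻ x in F, (g +ᵥ t).indicator 1 x ∂μ := by
        refine tsum_congr fun g => ?_
        rw [lintegral_indicator_one (ht.const_vadd g), Measure.restrict_apply (ht.const_vadd g)]
    _ = ∫⁻ x in F, ∑' g : G, (g +ᵥ t).indicator 1 x ∂μ :=
        (lintegral_tsum fun g => (measurable_one.indicator (ht.const_vadd g)).aemeasurable).symm
    _ ≤ ∫⁻ _ in F, (n : ℝ≥0∞) ∂μ := lintegral_mono fun x => by
        rw [hcount]; exact ENat.toENNReal_le.mpr (hn x)
    _ = n * μ F := setLIntegral_const F _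

end MeasureTheory.IsAddFundamentalDomain

theorem Submodule.encard_setOf_mem_vadd_le {R E : Type*} [Ring R] [AddCommGroup E] [Module R E]
    (Λ : Submodule R E) (s : Set E) (x : E) :
    {g : Λ | x ∈ g +ᵥ s}.encard ≤ ((s - s) ∩ Λ).encard := by
  rcases Set.eq_empty_or_nonempty {g : Λ | x ∈ g +ᵥ s} with hempty | ⟨g₀, hg₀⟩
  · simp [hempty]
  refine Set.encard_le_encard_of_injOn (f := fun g : Λ => (g : E) - g₀) ?_ ?_
  · rintro g ⟨a, ha, rfl⟩
    obtain ⟨b, hb, hba⟩ := hg₀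
    refine ⟨⟨b, hb, a, ha, ?_⟩, Λ.sub_mem g.2 g₀.2⟩
    simp only [vadd_eq_add] at hba ⊢
    rw [sub_eq_sub_iff_add_eq_add, add_comm, hba]
  · intro g _ g' _ h
    exact Subtype.ext (sub_left_injective h)

theorem ZLattice.measure_le_encard_mul_covolume {E : Type*} [NormedAddCommGroup E]
    [NormedSpace ℝ E] [FiniteDimensional ℝ E] [MeasurableSpace E] [BorelSpace E]
    (μ : Measure E) [μ.IsAddHaarMeasure] (Λ : Submodule ℤ E) [DiscreteTopology Λ]
    [IsZLattice ℝ Λ] {t : Set E} (ht : MeasurableSet t) :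
    μ t ≤ ((t - t) ∩ Λ).encard * ENNReal.ofReal (ZLattice.covolume Λ μ) := by
  have : MeasurableVAdd Λ E := (inferInstance : MeasurableVAdd Λ.toAddSubgroup E)
  have : VAddInvariantMeasure Λ E μ :=
    (inferInstance : VAddInvariantMeasure Λ.toAddSubgroup E μ)
  let F := ZSpan.fundamentalDomain ((Module.Free.chooseBasis ℤ Λ).ofZLatticeBasis ℝ)
  have hF : IsAddFundamentalDomain Λ F μ := ZLattice.isAddFundamentalDomain _ μ
  have hμF : μ F = ENNReal.ofReal (ZLattice.covolume Λ μ) := by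
    rw [ZLattice.covolume_eq_measure_fundamentalDomain Λ μ hF, measureReal_def,
      ENNReal.ofReal_toReal (ZSpan.fundamentalDomain_isBounded _).measure_lt_top.ne]
  rw [← hμF]
  exact hF.measure_le_mul_of_encard_le ht fun x => Λ.encard_setOf_mem_vadd_le t x

theorem exists_lattice_point_outside_general
    (E : Type*) [NormedAddCommGroup E] [NormedSpace ℝ E] [FiniteDimensional ℝ E]
    [MeasurableSpace E] [BorelSpace E]
    (μ : Measure E) [μ.IsAddHaarMeasure]
    (Λ : Submodule ℤ E) [DiscreteTopology Λ] [IsZLattice ℝ Λ]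
    (S : Set E)
    (q : ℕ) (hfin : ((S + S) ∩ (Λ : Set E)).Finite) (hq : hfin.toFinset.card = q)
    (Ω : ℝ → Set E) (hmeas : ∀ r, MeasurableSet (Ω r))
    (hvol : Tendsto (fun r => μ (Ω r)) atTop atTop) :
    ∃ (r : ℝ) (x : E), x ∈ Λ ∧ x ≠ 0 ∧ x ∈ Ω r - Ω r ∧ x ∉ S + S := by
  by_contra! h
  set c := ENNReal.ofReal (ZLattice.covolume Λ μ)
  have hcount (r : ℝ) : ((Ω r - Ω r) ∩ Λ).encard ≤ q + 1 :=
    calc ((Ω r - Ω r) ∩ Λ).encard ≤ (insert 0 ((S + S) ∩ Λ)).encard := by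
          refine Set.encard_le_encard fun x ⟨hxΩ, hxΛ⟩ => ?_
          by_cases hx : x = 0
          · exact .inl hx
          · exact .inr ⟨h r x hxΛ hx hxΩ, hxΛ⟩
      _ ≤ ((S + S) ∩ Λ).encard + 1 := Set.encard_insert_le _ _
      _ = q + 1 := by rw [hfin.encard_eq_coe_toFinset_card, hq]
  have hbound (r : ℝ) : μ (Ω r) ≤ (q + 1) * c :=
    calc μ (Ω r) ≤ ((Ω r - Ω r) ∩ Λ).encard * c :=
          ZLattice.measure_le_encard_mul_covolume μ Λ (hmeas r)
      _ ≤ (q + 1) * c := by gcongr; exact_mod_cast hcount r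
  obtain ⟨r, hr⟩ := (hvol.eventually_ge_atTop ⊤).exists
  exact ((hbound r).trans_lt (by finiteness)).not_ge hr

/-- **Counting step of the geometry-of-numbers lemma.** Let `Λ` be a full lattice in a
finite-dimensional real vector space `E`, `S ⊆ E` measurable with `(S + S) ∩ Λ` finite of
cardinality `q`, and `(Ω_r)_{r>0}` an increasing family of measurable sets whose volumes
tend to infinity, with `Ω_r + Ω_r` increasing. Then there exist `r` and a nonzero lattice
point `x ∈ Λ` with `x ∈ Ω_r - Ω_r` and `x ∉ S + S`. -/
theorem exists_lattice_point_outside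
    (E : Type*) [NormedAddCommGroup E] [NormedSpace ℝ E] [FiniteDimensional ℝ E]
    [MeasurableSpace E] [BorelSpace E]
    (μ : Measure E) [μ.IsAddHaarMeasure]
    (Λ : Submodule ℤ E) [DiscreteTopology Λ] [IsZLattice ℝ Λ]
    (S : Set E) (hS : MeasurableSet S)
    (q : ℕ) (hfin : ((S + S) ∩ (Λ : Set E)).Finite) (hq : hfin.toFinset.card = q)
    (Ω : ℝ → Set E) (hmeas : ∀ r, MeasurableSet (Ω r))
    (hmono : Monotone Ω)
    (hmono' : Monotone (fun r => Ω r + Ω r))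
    (hvol : Tendsto (fun r => μ (Ω r)) atTop atTop) :
    ∃ (r : ℝ) (x : E), x ∈ Λ ∧ x ≠ 0 ∧ x ∈ Ω r - Ω r ∧ x ∉ S + S :=
  exists_lattice_point_outside_general E μ Λ S q hfin hq Ω hmeas hvol
end
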